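/- Generalization bound: let g_S, g_T : X → [0,1] be λ-Lipschitz true labeling functions for source and target, and f : X → [0,1] a λ_H-Lipschitz hypothesis. Then γ_T(f, g_T) ≤ γ_S(f, g_S) + (λ + λ_H)·W_1(P_S, P_T) + E_{P_S}[|g_S − g_T|], where γ_S(f,g) = E_{P_S}[|f−g|] and γ_T(f,g) = E_{P_T}[|f−g|]. -/

import Mathlib

open MeasureTheory

/-- Wasserstein-1 distance via Kantorovich–Rubinstein duality. -/
noncomputable def W1 {X : Type*} [MeasurableSpace X] [PseudoMetricSpace X]
    (P Q : Measure X) : ℝ :=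
  sSup {r : ℝ | ∃ f : X → ℝ, LipschitzWith 1 f ∧ r = (∫ x, f x ∂P) - ∫ x, f x ∂Q}

lemma lip_const_mul {X : Type*} [PseudoMetricSpace X] (a : ℝ) (K : NNReal) (φ : X → ℝ)
    (h : LipschitzWith K φ) : LipschitzWith (‖a‖₊ * K) (fun x => a * φ x) := by
  apply LipschitzWith.of_dist_le_mul
  intro x y
  have hd := h.dist_le_mul x y
  simp only [Real.dist_eq] at *
  have : |a * φ x - a * φ y| = |a| * |φ x - φ y| := by
    rw [← abs_mul]; ring_nf
  rw [this]
  push_cast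
  rw [Real.norm_eq_abs, mul_assoc]
  exact mul_le_mul_of_nonneg_left hd (abs_nonneg a)

lemma int_abs_sub {X : Type*} [MeasurableSpace X] [PseudoMetricSpace X]
    [OpensMeasurableSpace X] (μ : Measure X) [IsProbabilityMeasure μ]
    (u v : X → ℝ) (hu : Continuous u) (hv : Continuous v)
    (hu01 : ∀ x, u x ∈ Set.Icc (0 : ℝ) 1) (hv01 : ∀ x, v x ∈ Set.Icc (0 : ℝ) 1) :
    Integrable (fun x => |u x - v x|) μ := by
  apply Integrable.mono' (integrable_const (1 : ℝ))
  · exact ((hu.sub hv).abs).aestronglyMeasurable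
  · filter_upwards with x
    rw [Real.norm_eq_abs, abs_abs]
    have h1 := hu01 x; have h2 := hv01 x
    simp only [Set.mem_Icc] at h1 h2
    rw [abs_sub_le_iff]
    constructor <;> linarith

lemma W1_bddAbove {X : Type*} [MeasurableSpace X] [PseudoMetricSpace X]
    [OpensMeasurableSpace X]
    (PS PT : Measure X) [IsProbabilityMeasure PS] [IsProbabilityMeasure PT]
    (x₀ : X)
    (hmomS : Integrable (fun x => dist x x₀) PS)
    (hmomT : Integrable (fun x => dist x x₀) PT) :
    BddAbove {r : ℝ | ∃ f : X → ℝ, LipschitzWith 1 f ∧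
      r = (∫ x, f x ∂PS) - ∫ x, f x ∂PT} := by
  refine ⟨(∫ x, dist x x₀ ∂PS) + ∫ x, dist x x₀ ∂PT, ?_⟩
  rintro r ⟨φ, hφ, rfl⟩
  have hψb : ∀ x, |φ x - φ x₀| ≤ dist x x₀ := by
    intro x
    have := hφ.dist_le_mul x x₀
    rwa [Real.dist_eq, NNReal.coe_one, one_mul] at this
  have hψm : ∀ (μ : Measure X), Integrable (fun x => dist x x₀) μ →
      Integrable (fun x => φ x - φ x₀) μ := by
    intro μ hμ
    apply Integrable.mono' hμ ((hφ.continuous.sub continuous_const).aestronglyMeasurable)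
    filter_upwards with x
    rw [Real.norm_eq_abs]; exact hψb x
  have hψS := hψm PS hmomS
  have hψT := hψm PT hmomT
  have hφS : Integrable φ PS := by
    have h := hψS.add (integrable_const (φ x₀))
    have he : (fun x => (φ x - φ x₀) + φ x₀) = φ := by funext x; ring
    rwa [← he]
  have hφT : Integrable φ PT := by
    have h := hψT.add (integrable_const (φ x₀))
    have he : (fun x => (φ x - φ x₀) + φ x₀) = φ := by funext x; ring
    rwa [← he]
  have hS : ∫ x, φ x ∂PS - φ x₀ = ∫ x, (φ x - φ x₀) ∂PS := by
    rw [integral_sub hφS (integrable_const _), integral_const]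
    simp
  have hT : ∫ x, φ x ∂PT - φ x₀ = ∫ x, (φ x - φ x₀) ∂PT := by
    rw [integral_sub hφT (integrable_const _), integral_const]
    simp
  have bS : ∫ x, (φ x - φ x₀) ∂PS ≤ ∫ x, dist x x₀ ∂PS := by
    apply integral_mono hψS hmomS
    intro x; exact (le_abs_self _).trans (hψb x)
  have bT : -(∫ x, dist x x₀ ∂PT) ≤ ∫ x, (φ x - φ x₀) ∂PT := by
    rw [← integral_neg]
    apply integral_mono hmomT.neg hψT
    intro x
    have := (abs_le.mp (hψb x)).1
    simpa using this
  linarith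

/-- Generalization bound: for `lam`-Lipschitz true labeling functions `gS, gT : X → [0,1]`
and a `lamH`-Lipschitz hypothesis `f : X → [0,1]`,
`γ_T(f,g_T) ≤ γ_S(f,g_S) + (lam + lamH)·W₁(P_S,P_T) + E_{P_S}[|g_S - g_T|]`. -/
theorem generalization_bound
    {X : Type*} [MeasurableSpace X] [PseudoMetricSpace X] [OpensMeasurableSpace X]
    (PS PT : Measure X) [IsProbabilityMeasure PS] [IsProbabilityMeasure PT]
    (x₀ : X)
    (hmomS : Integrable (fun x => dist x x₀) PS)
    (hmomT : Integrable (fun x => dist x x₀) PT)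
    (lam lamH : NNReal)
    (f gS gT : X → ℝ)
    (hf : LipschitzWith lamH f) (hgS : LipschitzWith lam gS) (hgT : LipschitzWith lam gT)
    (hf01 : ∀ x, f x ∈ Set.Icc (0 : ℝ) 1)
    (hgS01 : ∀ x, gS x ∈ Set.Icc (0 : ℝ) 1)
    (hgT01 : ∀ x, gT x ∈ Set.Icc (0 : ℝ) 1) :
    ∫ x, |f x - gT x| ∂PT
      ≤ (∫ x, |f x - gS x| ∂PS) + ((lam : ℝ) + (lamH : ℝ)) * W1 PS PT
        + ∫ x, |gS x - gT x| ∂PS := by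
  set c : ℝ := (lam : ℝ) + (lamH : ℝ) with hc
  have hc0 : 0 ≤ c := by positivity
  -- integrability of the |differences|
  have hIfT_T : Integrable (fun x => |f x - gT x|) PT :=
    int_abs_sub PT f gT hf.continuous hgT.continuous hf01 hgT01
  have hIfT_S : Integrable (fun x => |f x - gT x|) PS :=
    int_abs_sub PS f gT hf.continuous hgT.continuous hf01 hgT01
  have hIfS_S : Integrable (fun x => |f x - gS x|) PS :=
    int_abs_sub PS f gS hf.continuous hgS.continuous hf01 hgS01
  have hIST_S : Integrable (fun x => |gS x - gT x|) PS :=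
    int_abs_sub PS gS gT hgS.continuous hgT.continuous hgS01 hgT01
  -- triangle inequality step
  have tri : ∫ x, |f x - gT x| ∂PS
      ≤ (∫ x, |f x - gS x| ∂PS) + ∫ x, |gS x - gT x| ∂PS := by
    rw [← integral_add hIfS_S hIST_S]
    apply integral_mono hIfT_S (hIfS_S.add hIST_S)
    intro x
    exact abs_sub_le (f x) (gS x) (gT x)
  -- W1 step
  have key : ∫ x, |f x - gT x| ∂PT ≤ (∫ x, |f x - gT x| ∂PS) + c * W1 PS PT := by
    rcases eq_or_lt_of_le hc0 with hceq | hcpos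
    · -- c = 0 : f and gT are constant
      have hlam : (lam : ℝ) = 0 := by
        have := NNReal.coe_nonneg lam; have := NNReal.coe_nonneg lamH; linarith
      have hlamH : (lamH : ℝ) = 0 := by
        have := NNReal.coe_nonneg lam; have := NNReal.coe_nonneg lamH; linarith
      have hconst : ∀ x, |f x - gT x| = |f x₀ - gT x₀| := by
        intro x
        have h1 : f x = f x₀ := by
          have := hf.dist_le_mul x x₀
          rw [hlamH, zero_mul] at this
          exact dist_le_zero.mp this
        have h2 : gT x = gT x₀ := by
          have := hgT.dist_le_mul x x₀
          rw [hlam, zero_mul] at this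
          exact dist_le_zero.mp this
        rw [h1, h2]
      have e1 : ∫ x, |f x - gT x| ∂PT = |f x₀ - gT x₀| := by
        rw [show (fun x => |f x - gT x|) = fun _ => |f x₀ - gT x₀| from funext hconst]
        simp
      have e2 : ∫ x, |f x - gT x| ∂PS = |f x₀ - gT x₀| := by
        rw [show (fun x => |f x - gT x|) = fun _ => |f x₀ - gT x₀| from funext hconst]
        simp
      rw [e1, e2, ← hceq]
      simp
    · -- c > 0
      set h : X → ℝ := fun x => (-(1/c)) * |f x - gT x| with hh
      have hlipabs : LipschitzWith (lamH + lam) (fun x => |f x - gT x|) := by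
        have := (lipschitzWith_one_norm (E := ℝ)).comp (hf.sub hgT)
        simpa [Function.comp_def, Real.norm_eq_abs] using this
      have hlip : LipschitzWith 1 h := by
        have := lip_const_mul (-(1/c)) (lamH + lam) _ hlipabs
        apply this.weaken
        rw [← NNReal.coe_le_coe]
        push_cast
        rw [Real.norm_eq_abs, abs_neg, abs_of_nonneg (by positivity : (0:ℝ) ≤ 1/c)]
        rw [div_mul_eq_mul_div, one_mul, div_le_one hcpos]
        linarith
      have hmem : (∫ x, h x ∂PS) - ∫ x, h x ∂PT ∈
          {r : ℝ | ∃ φ : X → ℝ, LipschitzWith 1 φ ∧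
            r = (∫ x, φ x ∂PS) - ∫ x, φ x ∂PT} := ⟨h, hlip, rfl⟩
      have hle : (∫ x, h x ∂PS) - ∫ x, h x ∂PT ≤ W1 PS PT :=
        le_csSup (W1_bddAbove PS PT x₀ hmomS hmomT) hmem
      have eS : ∫ x, h x ∂PS = (-(1/c)) * ∫ x, |f x - gT x| ∂PS := by
        rw [hh]; exact integral_const_mul _ _
      have eT : ∫ x, h x ∂PT = (-(1/c)) * ∫ x, |f x - gT x| ∂PT := by
        rw [hh]; exact integral_const_mul _ _
      rw [eS, eT] at hle
      have hcne : c ≠ 0 := ne_of_gt hcpos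
      have := mul_le_mul_of_nonneg_left hle hc0
      have hid : c * ((-(1/c)) * ∫ x, |f x - gT x| ∂PS -
          (-(1/c)) * ∫ x, |f x - gT x| ∂PT)
          = (∫ x, |f x - gT x| ∂PT) - ∫ x, |f x - gT x| ∂PS := by
        field_simp
        ring
      rw [hid] at this
      linarith
  linarith
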